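/- arXiv:1309.0210 — 6 statements merged into one kernel-verified Lean document; each statement's English description precedes it below -/
import Mathlib

section
/- Let f : ℝ → ℝ be smooth (infinitely differentiable) and 2π-periodic. If ∫_0^{2π} f(θ)·(a(θ)·b′(θ) − a′(θ)·b(θ)) dθ = 0 for all smooth 2π-periodic functions a, b : ℝ → ℝ, then f is identically zero. -/
open Real Set Function MeasureTheory intervalIntegral

/-!
Testing against `a = sin`, `b = cos`, for which `a b' - a' b = -1`, shows that `f` has mean zero
over a period. Its primitive `F` is then smooth and `2π`-periodic, and testing against `a = 1`,
`b = F` gives `∫ f² = 0`, so the continuous function `f` vanishes.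
-/

section Primitive

variable {E : Type*} [NormedAddCommGroup E] [NormedSpace ℝ E] {f : ℝ → E}

theorem ContDiff.integral_right [CompleteSpace E] {n : ℕ∞} (hf : ContDiff ℝ n f) (a : ℝ) :
    ContDiff ℝ (n + 1) fun x => ∫ t in a..x, f t := by
  rw [contDiff_succ_iff_deriv]
  refine ⟨differentiable_integral_of_continuous hf.continuous, by simp, ?_⟩
  rwa [funext (hf.continuous.deriv_integral f a)]

theorem Function.Periodic.integral_right_of_integral_eq_zero {T : ℝ} (hf : Periodic f T)
    (hint : ∀ t₁ t₂, IntervalIntegrable f volume t₁ t₂) (h₀ : ∫ t in 0..T, f t = 0) (a : ℝ) :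
    Periodic (fun x => ∫ t in a..x, f t) T := fun x => by
  dsimp only
  rw [hf.intervalIntegral_add_eq_add a x hint, hf.intervalIntegral_add_eq a 0, zero_add, h₀,
    add_zero]

end Primitive

theorem Function.Periodic.eq_zero_of_nonneg_of_integral_eq_zero {g : ℝ → ℝ} {T : ℝ}
    (hg : Periodic g T) (hT : 0 < T) (hcont : Continuous g) (hnn : 0 ≤ g)
    (h : ∫ t in 0..T, g t = 0) : g = 0 := by
  have hae : g =ᵐ[volume.restrict (Ioc 0 T)] 0 :=
    (integral_eq_zero_iff_of_le_of_nonneg_ae hT.le (ae_of_all _ hnn)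
      (hcont.intervalIntegrable _ _)).mp h
  have hOn : EqOn g 0 (Ioc 0 T) :=
    Measure.eqOn_Ioc_of_ae_eq volume hae hcont.continuousOn continuousOn_const
  funext x
  obtain ⟨y, hy, hxy⟩ := hg.exists_mem_Ioc hT x 0
  rw [zero_add] at hy
  exact hxy.trans (hOn hy)

/-- If a smooth `2π`-periodic function `f : ℝ → ℝ` satisfies
`∫_0^{2π} f(θ)·(a(θ)·b′(θ) − a′(θ)·b(θ)) dθ = 0` for all smooth `2π`-periodic
functions `a, b : ℝ → ℝ`, then `f` is identically zero. -/
theorem vanishing_on_commutators_implies_zero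
    (f : ℝ → ℝ) (hf : ContDiff ℝ (⊤ : ℕ∞) f) (hfper : ∀ θ : ℝ, f (θ + 2 * π) = f θ)
    (h : ∀ a b : ℝ → ℝ, ContDiff ℝ (⊤ : ℕ∞) a → (∀ θ : ℝ, a (θ + 2 * π) = a θ) →
      ContDiff ℝ (⊤ : ℕ∞) b → (∀ θ : ℝ, b (θ + 2 * π) = b θ) →
      (∫ θ in (0:ℝ)..(2 * π), f θ * (a θ * deriv b θ - deriv a θ * b θ)) = 0) :
    ∀ θ : ℝ, f θ = 0 := by
  have hfc : Continuous f := hf.continuous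
  have hmean : ∫ θ in 0..2 * π, f θ = 0 := by
    have hsc := h sin cos contDiff_sin sin_add_two_pi contDiff_cos cos_add_two_pi
    have hwronskian : ∀ θ, f θ * (sin θ * deriv cos θ - deriv sin θ * cos θ) = -f θ := fun θ => by
      rw [Real.deriv_sin, Real.deriv_cos]
      linear_combination (-f θ) * sin_sq_add_cos_sq θ
    simpa only [hwronskian, intervalIntegral.integral_neg, neg_eq_zero] using hsc
  have hF := h (fun _ => 1) (fun x => ∫ t in 0..x, f t) contDiff_const (fun _ => rfl)
    ((hf.integral_right 0).of_le le_self_add)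
    (Periodic.integral_right_of_integral_eq_zero hfper (fun _ _ => hfc.intervalIntegrable _ _)
      hmean 0)
  have hsq : ∫ θ in 0..2 * π, f θ ^ 2 = 0 := by
    simpa only [funext (hfc.deriv_integral f 0), deriv_const', one_mul, zero_mul, sub_zero, ← sq]
      using hF
  have hf2 := Periodic.eq_zero_of_nonneg_of_integral_eq_zero (fun θ => congrArg (· ^ 2) (hfper θ))
    two_pi_pos (hfc.pow 2) (fun θ => sq_nonneg (f θ)) hsq
  exact fun θ => pow_eq_zero_iff two_ne_zero |>.mp (congrFun hf2 θ)
end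

section
/- Let X be a topological space, A a commutative group, and f a function assigning to each x ∈ X and each loop l based at x (a path from x to x) an element f x l ∈ A. For each pair x, y ∈ X define a relation on (Path x y) × A by (γ₁, a₁) ∼ (γ₂, a₂) if and only if a₁ = f x (γ₁.trans γ₂.symm) · a₂. Then f satisfies the fusion condition if and only if for every x, y ∈ X the relation ∼ on (Path x y) × A is an equivalence relation. -/
/-!
Set `g γ₁ γ₂ := f x (γ₁.trans γ₂.symm)`. The fusion condition says that `g` is a multiplicative
cocycle, `g γ₁ γ₂ * g γ₂ γ₃ = g γ₁ γ₃`, and the relation is `(γ₁, a₁) ∼ (γ₂, a₂) ↔ a₁ = g γ₁ γ₂ * a₂`.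
A cocycle vanishes on the diagonal and satisfies `g γ₂ γ₁ = (g γ₁ γ₂)⁻¹`, which gives reflexivity and
symmetry; transitivity is the cocycle identity itself. Conversely, transitivity applied to
`(γ₁, g γ₁ γ₂ * g γ₂ γ₃) ∼ (γ₂, g γ₂ γ₃) ∼ (γ₃, 1)` returns the cocycle identity.
-/

section Cocycle

variable {P G : Type*} [Group G] {g : P → P → G}

theorem cocycle_apply_self (hg : ∀ a b c, g a b * g b c = g a c) (a : P) : g a a = 1 :=
  mul_eq_left.mp (hg a a a)

theorem cocycle_swap_mul (hg : ∀ a b c, g a b * g b c = g a c) (a b : P) :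
    g b a * g a b = 1 := by
  rw [hg, cocycle_apply_self hg]

theorem equivalence_of_cocycle (hg : ∀ a b c, g a b * g b c = g a c) :
    Equivalence (fun p q : P × G => p.2 = g p.1 q.1 * q.2) where
  refl p := by rw [cocycle_apply_self hg, one_mul]
  symm {p q} hpq := by rw [hpq, ← mul_assoc, cocycle_swap_mul hg, one_mul]
  trans {p q r} hpq hqr := by rw [hpq, hqr, ← mul_assoc, hg]

theorem cocycle_of_equivalence (h : Equivalence (fun p q : P × G => p.2 = g p.1 q.1 * q.2))
    (a b c : P) : g a b * g b c = g a c := by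
  simpa using h.trans (x := (a, g a b * g b c)) (y := (b, g b c)) (z := (c, 1)) rfl (mul_one _).symm

theorem equivalence_iff_cocycle :
    Equivalence (fun p q : P × G => p.2 = g p.1 q.1 * q.2) ↔ ∀ a b c, g a b * g b c = g a c :=
  ⟨cocycle_of_equivalence, equivalence_of_cocycle⟩

end Cocycle

/-- For a function `f` assigning to each point `x` of a topological space `X` and each
loop based at `x` an element of a commutative group `A`, the fusion condition
`f x (γ₁.trans γ₂.symm) * f x (γ₂.trans γ₃.symm) = f x (γ₁.trans γ₃.symm)` holds
(for all paths `γ₁, γ₂, γ₃` with the same endpoints) if and only if, for every pair of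
points `x, y`, the relation `(γ₁, a₁) ∼ (γ₂, a₂) ↔ a₁ = f x (γ₁.trans γ₂.symm) * a₂`
on `(Path x y) × A` is an equivalence relation. -/
theorem fusion_iff_equivalence {X : Type*} [TopologicalSpace X] {A : Type*} [CommGroup A]
    (f : ∀ x : X, Path x x → A) :
    (∀ (x y : X) (γ₁ γ₂ γ₃ : Path x y),
        f x (γ₁.trans γ₂.symm) * f x (γ₂.trans γ₃.symm) = f x (γ₁.trans γ₃.symm)) ↔
      (∀ x y : X,
        Equivalence (fun p q : Path x y × A => p.2 = f x (p.1.trans q.1.symm) * q.2)) :=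
  forall₂_congr fun _ _ => equivalence_iff_cocycle.symm
end

section
/- Let X be a topological space, A a commutative group, and f a function assigning to each x ∈ X and each loop based at x an element of A, satisfying the fusion condition and invariant under reparametrization. Then f x (Path.refl x) = 1; f x (l.symm) = (f x l)⁻¹ for every loop l based at x; and f x (l₁.trans l₂) = (f x l₁) · (f x l₂) for all loops l₁, l₂ based at x. In particular f is multiplicative under the figure-of-eight (concatenation) product of based loops. -/
/-!
Read `f x (γ₁.trans γ₂.symm)` as a difference `d γ₁ γ₂`; fusion is the cocycle identity
`d γ₁ γ₂ * d γ₂ γ₃ = d γ₁ γ₃`, so `d γ γ = 1`. For loops,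
`f x (l₁.trans l₂) = d l₁ l₂.symm = d l₁ refl * d refl l₂.symm`, which is
`f x (l₁.trans refl) * f x (refl.trans l₂)`, and the constant paths drop out because
`l.trans refl` and `refl.trans l` are monotone reparametrizations of `l`.
-/

open unitInterval Set

namespace Path

variable {X : Type*} [TopologicalSpace X] {x y : X}

noncomputable def transReflReparam (t : I) : I := projIcc 0 1 zero_le_one (2 * (t : ℝ))

noncomputable def reflTransReparam (t : I) : I := projIcc 0 1 zero_le_one (2 * (t : ℝ) - 1)

theorem continuous_transReflReparam : Continuous transReflReparam := by
  unfold transReflReparam; fun_prop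

theorem continuous_reflTransReparam : Continuous reflTransReparam := by
  unfold reflTransReparam; fun_prop

theorem monotone_transReflReparam : Monotone transReflReparam := fun s t (h : (s : ℝ) ≤ t) =>
  monotone_projIcc _ (by linarith)

theorem monotone_reflTransReparam : Monotone reflTransReparam := fun s t (h : (s : ℝ) ≤ t) =>
  monotone_projIcc _ (by linarith)

theorem transReflReparam_zero : transReflReparam 0 = 0 := by
  simp [transReflReparam]

theorem transReflReparam_one : transReflReparam 1 = 1 := by
  simp [transReflReparam, projIcc_of_right_le]

theorem reflTransReparam_zero : reflTransReparam 0 = 0 := by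
  simp [reflTransReparam, projIcc_of_le_left]

theorem reflTransReparam_one : reflTransReparam 1 = 1 := by
  norm_num [reflTransReparam]

theorem trans_refl_eq_reparam (γ : Path x y) :
    γ.trans (Path.refl y) = γ.reparam transReflReparam continuous_transReflReparam
      transReflReparam_zero transReflReparam_one := by
  ext t
  rw [trans_apply, coe_reparam, Function.comp_apply, transReflReparam]
  split_ifs with h
  · rw [projIcc_of_mem _ ⟨by linarith [t.2.1], by linarith⟩]
  · rw [projIcc_of_right_le _ (by linarith)]
    simp

theorem refl_trans_eq_reparam (γ : Path x y) :
    (Path.refl x).trans γ = γ.reparam reflTransReparam continuous_reflTransReparam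
      reflTransReparam_zero reflTransReparam_one := by
  ext t
  rw [trans_apply, coe_reparam, Function.comp_apply, reflTransReparam]
  split_ifs with h
  · rw [projIcc_of_le_left _ (by linarith)]
    simp
  · rw [projIcc_of_mem _ ⟨by linarith, by linarith [t.2.2]⟩]

end Path

section FusiveMaps

variable {X : Type*} [TopologicalSpace X] {A : Type*} {x : X}

def IsFusive [Mul A] (f : ∀ x : X, Path x x → A) : Prop :=
  ∀ (x y : X) (γ₁ γ₂ γ₃ : Path x y),
    f x (γ₁.trans γ₂.symm) * f x (γ₂.trans γ₃.symm) = f x (γ₁.trans γ₃.symm)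

def IsReparamInvariant (f : ∀ x : X, Path x x → A) : Prop :=
  ∀ (x : X) (l : Path x x) (φ : I → I) (hφc : Continuous φ) (_ : Monotone φ)
    (hφ₀ : φ 0 = 0) (hφ₁ : φ 1 = 1), f x (l.reparam φ hφc hφ₀ hφ₁) = f x l

variable {f : ∀ x : X, Path x x → A}

theorem IsReparamInvariant.apply_trans_refl (hr : IsReparamInvariant f) (l : Path x x) :
    f x (l.trans (.refl x)) = f x l := by
  rw [l.trans_refl_eq_reparam, hr _ _ _ _ Path.monotone_transReflReparam]

theorem IsReparamInvariant.apply_refl_trans (hr : IsReparamInvariant f) (l : Path x x) :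
    f x ((Path.refl x).trans l) = f x l := by
  rw [l.refl_trans_eq_reparam, hr _ _ _ _ Path.monotone_reflTransReparam]

variable [Group A]

theorem IsFusive.apply_trans_symm_self (hf : IsFusive f) {y : X} (γ : Path x y) :
    f x (γ.trans γ.symm) = 1 :=
  mul_eq_left.mp (hf x y γ γ γ)

theorem IsFusive.apply_refl (hf : IsFusive f) : f x (.refl x) = 1 := by
  simpa only [Path.refl_symm, Path.refl_trans_refl] using hf.apply_trans_symm_self (.refl x)

theorem IsFusive.apply_trans (hf : IsFusive f) (hr : IsReparamInvariant f) (l₁ l₂ : Path x x) :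
    f x (l₁.trans l₂) = f x l₁ * f x l₂ := by
  simpa only [Path.refl_symm, Path.symm_symm, hr.apply_trans_refl, hr.apply_refl_trans]
    using (hf x x l₁ (.refl x) l₂.symm).symm

theorem IsFusive.apply_symm (hf : IsFusive f) (hr : IsReparamInvariant f) (l : Path x x) :
    f x l.symm = (f x l)⁻¹ :=
  eq_inv_of_mul_eq_one_right <| by rw [← hf.apply_trans hr, hf.apply_trans_symm_self]

end FusiveMaps

/-- If `f`, assigning to each point `x` of a topological space `X` and each loop based at
`x` an element of a commutative group `A`, satisfies the fusion condition and is invariant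
under (monotone) reparametrization of loops, then `f x (Path.refl x) = 1`,
`f x l.symm = (f x l)⁻¹`, and `f` is multiplicative under the figure-of-eight
(concatenation) product of based loops: `f x (l₁.trans l₂) = f x l₁ * f x l₂`. -/
theorem fusive_implies_figure_of_eight {X : Type*} [TopologicalSpace X]
    {A : Type*} [CommGroup A] (f : ∀ x : X, Path x x → A)
    (hfus : ∀ (x y : X) (γ₁ γ₂ γ₃ : Path x y),
      f x (γ₁.trans γ₂.symm) * f x (γ₂.trans γ₃.symm) = f x (γ₁.trans γ₃.symm))
    (hrep : ∀ (x : X) (l : Path x x) (φ : I → I) (hφc : Continuous φ) (_ : Monotone φ)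
      (hφ₀ : φ 0 = 0) (hφ₁ : φ 1 = 1), f x (l.reparam φ hφc hφ₀ hφ₁) = f x l) :
    (∀ x : X, f x (Path.refl x) = 1) ∧
      (∀ (x : X) (l : Path x x), f x l.symm = (f x l)⁻¹) ∧
      (∀ (x : X) (l₁ l₂ : Path x x), f x (l₁.trans l₂) = f x l₁ * f x l₂) := by
  have hf : IsFusive f := hfus
  have hr : IsReparamInvariant f := hrep
  exact ⟨fun _ => hf.apply_refl, fun _ => hf.apply_symm hr, fun _ => hf.apply_trans hr⟩
end

section
/- Let f : ℝ → ℝ be continuously differentiable (ContDiff ℝ 1). Let X = C(AddCircle (2π), ℝ) be the Banach space of continuous real-valued functions on the circle with the supremum norm, and let μ be the Haar measure on AddCircle (2π). Define F : X → ℝ by F(u) = ∫ f(u(θ)) dμ(θ). Then for every u ∈ X there exists a continuous linear functional L : X →L[ℝ] ℝ such that L(v) = ∫ f′(u(θ))·v(θ) dμ(θ) for all v ∈ X, and F is Fréchet differentiable at u with derivative L (HasFDerivAt F L u). -/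
open Real MeasureTheory

instance : Fact (0 < 2 * π) := ⟨by positivity⟩

/-!
`F` is integration composed with the superposition operator `u ↦ f ∘ u` on `C(S¹, ℝ)`.
Integration is a continuous linear functional because the circle is compact and has finite
measure, so it suffices to differentiate the superposition operator, whose derivative at `u` is
multiplication by `f′ ∘ u`. For that, the mean value inequality bounds the Taylor remainder
`f (u θ + v θ) - f (u θ) - f′ (u θ) v θ` by `ε |v θ|` uniformly in `θ` once `‖v‖` is smaller
than a modulus of uniform continuity of `f′` on a compact interval containing the range of `u`.
-/

theorem abs_image_sub_sub_mul_le_of_abs_deriv_sub_le {f f' : ℝ → ℝ}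
    (hf : ∀ x, HasDerivAt f (f' x) x) {s : Set ℝ} (hs : Convex ℝ s) {a b C : ℝ}
    (ha : a ∈ s) (hb : b ∈ s) (bound : ∀ x ∈ s, |f' x - f' a| ≤ C) :
    |f b - f a - f' a * (b - a)| ≤ C * |b - a| := by
  have hg : ∀ x ∈ s, HasDerivWithinAt (fun y => f y - f' a * y) (f' x - f' a) s x :=
    fun x _ => ((hf x).sub
      (((hasDerivAt_id x).const_mul (f' a)).congr_deriv (mul_one _))).hasDerivWithinAt
  have := hs.norm_image_sub_le_of_norm_hasDerivWithin_le hg bound ha hb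
  simp only [Real.norm_eq_abs] at this
  convert this using 2
  ring

theorem exists_pos_forall_abs_image_sub_sub_mul_le {f f' : ℝ → ℝ}
    (hf : ∀ x, HasDerivAt f (f' x) x) (hf' : Continuous f') (R : ℝ) {ε : ℝ} (hε : 0 < ε) :
    ∃ δ > 0, ∀ a b, |a| ≤ R → |b - a| ≤ δ → |f b - f a - f' a * (b - a)| ≤ ε * |b - a| := by
  obtain ⟨δ, hδ, hf'δ⟩ := Metric.uniformContinuousOn_iff_le.1
    ((isCompact_closedBall (0 : ℝ) (R + 1)).uniformContinuousOn_of_continuous hf'.continuousOn)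
    ε hε
  refine ⟨min δ 1, by positivity, fun a b ha hba => ?_⟩
  have hball : Metric.closedBall a (min δ 1) ⊆ Metric.closedBall 0 (R + 1) := by
    refine Metric.closedBall_subset_closedBall' ?_
    rw [Real.dist_eq, sub_zero]
    linarith [min_le_right δ 1]
  refine abs_image_sub_sub_mul_le_of_abs_deriv_sub_le hf (convex_closedBall a (min δ 1))
    (Metric.mem_closedBall_self (by positivity)) (by rwa [Metric.mem_closedBall, Real.dist_eq])
    fun x hx => ?_
  exact hf'δ x (hball hx) a (hball (Metric.mem_closedBall_self (by positivity)))
    ((Metric.mem_closedBall.1 hx).trans (min_le_left _ _))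

namespace ContinuousMap

variable {X : Type*} [TopologicalSpace X] [CompactSpace X]

theorem hasFDerivAt_comp_left {f f' : C(ℝ, ℝ)} (hf : ∀ x, HasDerivAt f (f' x) x)
    (u : C(X, ℝ)) :
    HasFDerivAt (fun u : C(X, ℝ) => f.comp u)
      (ContinuousLinearMap.mul ℝ C(X, ℝ) (f'.comp u)) u := by
  rw [hasFDerivAt_iff_isLittleO_nhds_zero, Asymptotics.isLittleO_iff]
  intro ε hε
  obtain ⟨δ, hδ, htaylor⟩ :=
    exists_pos_forall_abs_image_sub_sub_mul_le hf f'.continuous ‖u‖ hε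
  filter_upwards [Metric.closedBall_mem_nhds (0 : C(X, ℝ)) hδ] with v hv
  rw [mem_closedBall_zero_iff] at hv
  refine (norm_le _ (by positivity)).2 fun θ => ?_
  have hvθ : |v θ| ≤ ‖v‖ := v.norm_coe_le_norm θ
  have := htaylor (u θ) (u θ + v θ) (u.norm_coe_le_norm θ) (by simpa using hvθ.trans hv)
  rw [add_sub_cancel_left] at this
  simpa using this.trans (mul_le_mul_of_nonneg_left hvθ hε.le)

section

variable [MeasurableSpace X] [BorelSpace X] {E : Type*} [NormedAddCommGroup E] [NormedSpace ℝ E]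
  [CompleteSpace E] [SecondCountableTopologyEither X E]

noncomputable def integralCLM (μ : Measure X) [IsFiniteMeasure μ] : C(X, E) →L[ℝ] E :=
  L1.integralCLM.comp (toLp 1 μ ℝ)

theorem integralCLM_apply (μ : Measure X) [IsFiniteMeasure μ] (g : C(X, E)) :
    integralCLM μ g = ∫ x, g x ∂μ := by
  rw [integralCLM, ContinuousLinearMap.comp_apply, ← L1.integral_eq, L1.integral_eq_integral]
  exact integral_congr_ae (coeFn_toLp μ g)

end

end ContinuousMap

/-- For `f : ℝ → ℝ` continuously differentiable, the nonlinear functional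
`F(u) = ∫_{S¹} f(u(θ)) dθ` on the Banach space `C(S¹, ℝ)` of continuous functions on the
circle `S¹ = ℝ/2πℤ` (with the supremum norm and Haar measure) is Fréchet differentiable
at every `u`, with derivative the continuous linear functional
`v ↦ ∫_{S¹} f′(u(θ))·v(θ) dθ`. -/
theorem first_derivative_of_loop_functional
    (f : ℝ → ℝ) (hf : ContDiff ℝ 1 f)
    (F : C(AddCircle (2 * π), ℝ) → ℝ)
    (hF : ∀ u : C(AddCircle (2 * π), ℝ), F u = ∫ θ : AddCircle (2 * π), f (u θ)) :
    ∀ u : C(AddCircle (2 * π), ℝ),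
      ∃ L : C(AddCircle (2 * π), ℝ) →L[ℝ] ℝ,
        (∀ v : C(AddCircle (2 * π), ℝ), L v = ∫ θ : AddCircle (2 * π), deriv f (u θ) * v θ) ∧
        HasFDerivAt F L u := by
  intro u
  let f₀ : C(ℝ, ℝ) := ⟨f, hf.continuous⟩
  let f₁ : C(ℝ, ℝ) := ⟨deriv f, hf.continuous_deriv le_rfl⟩
  let I : C(AddCircle (2 * π), ℝ) →L[ℝ] ℝ := ContinuousMap.integralCLM volume
  have hF_comp : F = I ∘ fun u => f₀.comp u := funext fun u => by
    simp [I, hF, ContinuousMap.integralCLM_apply, f₀]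
  refine ⟨I.comp (ContinuousLinearMap.mul ℝ _ (f₁.comp u)), fun v => ?_, ?_⟩
  · simp [I, ContinuousMap.integralCLM_apply, f₁]
  · rw [hF_comp]
    exact I.hasFDerivAt.comp u <| ContinuousMap.hasFDerivAt_comp_left
      (fun x => (hf.differentiable one_ne_zero x).hasDerivAt) u
end

section
/- Let p : E → Z be a covering map of topological spaces, let x, y ∈ Z, let e ∈ E with p(e) = x, and suppose the fiber p⁻¹({y}) has exactly two elements. Let γ₁, γ₂, γ₃ be paths from x to y in Z, and for each pair (i, j) ∈ {(1,2), (2,3), (1,3)} let L_{ij} : [0,1] → E be a continuous map with p ∘ L_{ij} = γ_i.trans γ_j.symm (the fused loop) and L_{ij}(0) = e. Then L₁₃(1) = e if and only if (L₁₂(1) = e ↔ L₂₃(1) = e). Equivalently, the ℤ₂-valued holonomy of a double cover, h(l) = 0 iff the lift of l starting at e is closed, satisfies the fusion condition h(l₁₂) + h(l₂₃) = h(l₁₃). -/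
/-!
Transport along a path `γ : Path x y` is the monodromy bijection `T_γ` from the fiber over `x`
to the fiber over `y`, and the lift of the fused loop `γ.trans δ.symm` from `e` ends at
`T_δ⁻¹ (T_γ e)`; so it closes exactly when `T_γ e = T_δ e`. With `a, b, c` the transports of `e`
along `γ₁, γ₂, γ₃`, the claim becomes `a = c ↔ (a = b ↔ b = c)`, which holds for any three
points of a two-element set such as the fiber over `y`.
-/

open unitInterval

theorem eq_iff_eq_iff_eq_of_natCard_eq_two {α : Type*} (h : Nat.card α = 2) (a b c : α) :
    a = c ↔ (a = b ↔ b = c) := by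
  have : Finite α := Nat.finite_of_card_ne_zero (by omega)
  obtain ⟨f⟩ : Nonempty (α ≃ Bool) := Finite.card_eq.mp (by simpa using h)
  have hBool : ∀ a b c : Bool, a = c ↔ (a = b ↔ b = c) := by decide
  simpa only [f.injective.eq_iff] using hBool (f a) (f b) (f c)

namespace IsCoveringMap

variable {E X : Type*} [TopologicalSpace E] [TopologicalSpace X] {p : E → X}
  (cov : IsCoveringMap p) {x y : X}

theorem monodromy_symm_apply_eq_iff (γ : Path.Homotopic.Quotient x y) (a : p ⁻¹' {y})
    (e : p ⁻¹' {x}) : cov.monodromy γ.symm a = e ↔ a = cov.monodromy γ e := by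
  have hsymm : cov.monodromy γ.symm (cov.monodromy γ e) = e := by
    rw [← monodromy_trans_apply, Path.Homotopic.Quotient.trans_symm, monodromy_refl, id]
  rw [← (cov.monodromy_bijective γ.symm).injective.eq_iff, hsymm]

theorem lift_apply_one_eq_monodromy {γ : Path x y} {e : E} (hex : p e = x) {Γ : I → E}
    (hΓ : Continuous Γ) (hΓγ : ∀ t, p (Γ t) = γ t) (hΓ0 : Γ 0 = e) :
    Γ 1 = cov.monodromy (.mk γ) ⟨e, hex⟩ := by
  have hlift := (cov.eq_liftPath_iff (γ := γ) (γ.source.trans hex.symm)).mpr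
    ⟨hΓ, funext hΓγ, hΓ0⟩
  exact congrFun hlift 1

theorem lift_trans_symm_apply_one_eq_iff {γ δ : Path x y} {e : E} (hex : p e = x) {Γ : I → E}
    (hΓ : Continuous Γ) (hΓγ : ∀ t, p (Γ t) = (γ.trans δ.symm) t) (hΓ0 : Γ 0 = e) :
    Γ 1 = e ↔ cov.monodromy (.mk γ) ⟨e, hex⟩ = cov.monodromy (.mk δ) ⟨e, hex⟩ := by
  rw [cov.lift_apply_one_eq_monodromy hex hΓ hΓγ hΓ0, Path.Homotopic.Quotient.mk_trans,
    Path.Homotopic.Quotient.mk_symm, monodromy_trans_apply, ← cov.monodromy_symm_apply_eq_iff,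
    ← Subtype.coe_inj]

end IsCoveringMap

/-- Holonomy of a double cover satisfies the fusion condition.  Let `p : E → Z` be a
covering map, `e` a point over `x`, and suppose the fiber over `y` has exactly two
elements.  Given paths `γ₁, γ₂, γ₃` from `x` to `y` and lifts `L₁₂, L₂₃, L₁₃` starting
at `e` of the fused loops `γᵢ.trans γⱼ.symm`, the lift `L₁₃` is closed if and only if
`L₁₂` is closed exactly when `L₂₃` is closed; i.e. the `ℤ₂`-holonomy satisfies
`h(l₁₂) + h(l₂₃) = h(l₁₃)`. -/
theorem double_cover_holonomy_fusion {E Z : Type*} [TopologicalSpace E] [TopologicalSpace Z]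
    (p : E → Z) (hp : IsCoveringMap p) (x y : Z) (e : E) (hex : p e = x)
    (hfib : Nat.card (p ⁻¹' {y} : Set E) = 2)
    (γ₁ γ₂ γ₃ : Path x y)
    (L₁₂ L₂₃ L₁₃ : I → E)
    (hc₁₂ : Continuous L₁₂) (hc₂₃ : Continuous L₂₃) (hc₁₃ : Continuous L₁₃)
    (hl₁₂ : ∀ t : I, p (L₁₂ t) = (γ₁.trans γ₂.symm) t)
    (hl₂₃ : ∀ t : I, p (L₂₃ t) = (γ₂.trans γ₃.symm) t)
    (hl₁₃ : ∀ t : I, p (L₁₃ t) = (γ₁.trans γ₃.symm) t)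
    (h0₁₂ : L₁₂ 0 = e) (h0₂₃ : L₂₃ 0 = e) (h0₁₃ : L₁₃ 0 = e) :
    L₁₃ 1 = e ↔ (L₁₂ 1 = e ↔ L₂₃ 1 = e) := by
  rw [hp.lift_trans_symm_apply_one_eq_iff hex hc₁₃ hl₁₃ h0₁₃,
    hp.lift_trans_symm_apply_one_eq_iff hex hc₁₂ hl₁₂ h0₁₂,
    hp.lift_trans_symm_apply_one_eq_iff hex hc₂₃ hl₂₃ h0₂₃]
  exact eq_iff_eq_iff_eq_of_natCard_eq_two hfib _ _ _
end

section
/- Let F be a contravariant functor from topological spaces to abelian groups (a functor TopCatᵒᵖ ⥤ AddCommGrp), let M be a topological space and m̄ ∈ M a point. Let π₁, π₂ : M × M → M and π₁₂, π₁₃, π₂₃ : M × M × M → M × M denote the continuous coordinate projections, and let i₁ : M → M × M, x ↦ (m̄, x), and i₂ : M × M → M × M × M, (x, y) ↦ (m̄, x, y). If α ∈ F(M × M) satisfies F(π₂₃)(α) − F(π₁₃)(α) + F(π₁₂)(α) = 0 in F(M × M × M), then α = F(π₂)(β) − F(π₁)(β), where β = F(i₁)(α) ∈ F(M). -/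
open CategoryTheory Opposite

variable (M : Type) [TopologicalSpace M]

/-- First coordinate projection `M × M → M` as a morphism of `TopCat`. -/
def proj₁ : TopCat.of (M × M) ⟶ TopCat.of M := TopCat.ofHom ⟨Prod.fst, continuous_fst⟩

/-- Second coordinate projection `M × M → M` as a morphism of `TopCat`. -/
def proj₂ : TopCat.of (M × M) ⟶ TopCat.of M := TopCat.ofHom ⟨Prod.snd, continuous_snd⟩

/-- The projection `M × M × M → M × M` keeping the first and second coordinates. -/
def proj₁₂ : TopCat.of (M × M × M) ⟶ TopCat.of (M × M) :=
  TopCat.ofHom ⟨fun q => (q.1, q.2.1), by fun_prop⟩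

/-- The projection `M × M × M → M × M` keeping the first and third coordinates. -/
def proj₁₃ : TopCat.of (M × M × M) ⟶ TopCat.of (M × M) :=
  TopCat.ofHom ⟨fun q => (q.1, q.2.2), by fun_prop⟩

/-- The projection `M × M × M → M × M` keeping the second and third coordinates. -/
def proj₂₃ : TopCat.of (M × M × M) ⟶ TopCat.of (M × M) := TopCat.ofHom ⟨Prod.snd, continuous_snd⟩

/-- The embedding `M → M × M`, `x ↦ (m₀, x)`, as a morphism of `TopCat`. -/
def emb₁ (m₀ : M) : TopCat.of M ⟶ TopCat.of (M × M) :=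
  TopCat.ofHom ⟨fun x => (m₀, x), by fun_prop⟩

/-- The embedding `M × M → M × M × M`, `(x, y) ↦ (m₀, x, y)`, as a morphism of `TopCat`. -/
def emb₂ (m₀ : M) : TopCat.of (M × M) ⟶ TopCat.of (M × M × M) :=
  TopCat.ofHom ⟨fun q => (m₀, q), by fun_prop⟩

namespace CategoryTheory.Functor

variable {C : Type*} [Category C] (F : Cᵒᵖ ⥤ AddCommGrpCat)

theorem map_op_comp_apply {X Y Z : C} (f : X ⟶ Y) (g : Y ⟶ Z) (a : F.obj (op Z)) :
    F.map (f ≫ g).op a = F.map f.op (F.map g.op a) := by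
  rw [op_comp, F.map_comp, ConcreteCategory.comp_apply]

/-- The cocycle identity pulled back along a common section `i₂` of the face maps. -/
theorem eq_sub_of_cocycle {X₁ X₂ X₃ : C} {p₁ p₂ : X₂ ⟶ X₁} {p₁₂ p₁₃ p₂₃ : X₃ ⟶ X₂}
    (i₁ : X₁ ⟶ X₂) (i₂ : X₂ ⟶ X₃) (h₂₃ : i₂ ≫ p₂₃ = 𝟙 X₂) (h₁₃ : i₂ ≫ p₁₃ = p₂ ≫ i₁)
    (h₁₂ : i₂ ≫ p₁₂ = p₁ ≫ i₁) (α : F.obj (op X₂))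
    (hα : F.map p₂₃.op α - F.map p₁₃.op α + F.map p₁₂.op α = 0) :
    α = F.map p₂.op (F.map i₁.op α) - F.map p₁.op (F.map i₁.op α) := by
  have e₂₃ : F.map i₂.op (F.map p₂₃.op α) = α := by
    rw [← map_op_comp_apply, h₂₃, op_id, F.map_id, ConcreteCategory.id_apply]
  have e₁₃ : F.map i₂.op (F.map p₁₃.op α) = F.map p₂.op (F.map i₁.op α) := by
    rw [← map_op_comp_apply, h₁₃, map_op_comp_apply]
  have e₁₂ : F.map i₂.op (F.map p₁₂.op α) = F.map p₁.op (F.map i₁.op α) := by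
    rw [← map_op_comp_apply, h₁₂, map_op_comp_apply]
  have restricted := congrArg (F.map i₂.op) hα
  rw [_root_.map_add, _root_.map_sub, e₂₃, e₁₃, e₁₂, _root_.map_zero] at restricted
  rw [← sub_eq_zero, ← restricted]
  abel

end CategoryTheory.Functor

section

variable {M}

theorem emb₂_comp_proj₂₃ (m₀ : M) : emb₂ M m₀ ≫ proj₂₃ M = 𝟙 _ := rfl

theorem emb₂_comp_proj₁₃ (m₀ : M) : emb₂ M m₀ ≫ proj₁₃ M = proj₂ M ≫ emb₁ M m₀ := rfl

theorem emb₂_comp_proj₁₂ (m₀ : M) : emb₂ M m₀ ≫ proj₁₂ M = proj₁ M ≫ emb₁ M m₀ := rfl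

end

/-- For a contravariant functor `F` from topological spaces to abelian groups, any class
`α ∈ F(M × M)` satisfying the simplicial cocycle identity
`F(π₂₃)(α) − F(π₁₃)(α) + F(π₁₂)(α) = 0` in `F(M × M × M)` splits as
`α = F(π₂)(β) − F(π₁)(β)`, where `β = F(i₁)(α) ∈ F(M)` is the pull-back of `α` along
`i₁ : x ↦ (m₀, x)` for a chosen base point `m₀ ∈ M`. -/
theorem simplicial_cocycle_splits (F : TopCatᵒᵖ ⥤ AddCommGrpCat) (m₀ : M)
    (α : F.obj (op (TopCat.of (M × M))))
    (hα : F.map (proj₂₃ M).op α - F.map (proj₁₃ M).op α + F.map (proj₁₂ M).op α = 0) :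
    α = F.map (proj₂ M).op (F.map (emb₁ M m₀).op α)
        - F.map (proj₁ M).op (F.map (emb₁ M m₀).op α) :=
  F.eq_sub_of_cocycle (emb₁ M m₀) (emb₂ M m₀) (emb₂_comp_proj₂₃ m₀) (emb₂_comp_proj₁₃ m₀)
    (emb₂_comp_proj₁₂ m₀) α hα
end
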